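/- arXiv:2106.11610 — 3 statements merged into one kernel-verified Lean document; each statement's English description precedes it below -/
import Mathlib

section
/- For the if-then-else unification counting rule: the number of programs of the form `if P₁ then P₂ else P₃` whose consistency vector lies in a set C equals Σ over boolean value vectors b of (number of boolean programs with value vector b) × (number of then-branch programs whose consistency vector agrees with C at positions where b is true) × (number of else-branch programs whose consistency vector agrees with C at positions where b is false), provided the structure (P₁,P₂,P₃) is uniquely determined by the composed program; consequently the rule gives an exact count under unique decomposition and an upper bound in general. -/
/-- Exact counting rule for if-then-else unification.  Condition programs in
`P₁` have boolean value vectors `bval`; branch programs in `P₂`/`P₃` have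
consistency vectors `cons₂`/`cons₃`.  A composed program
`if p₁ then p₂ else p₃` is consistent with example `i` iff the branch chosen
by `bval p₁ i` is.  The requirement set `C` (a `{✓,⊤}`-vector, encoded as
`C i = true` meaning ✓ is required at position `i`).  Since each composed
program here is identified with its triple `(p₁, p₂, p₃)` (unique
decomposition), the number of composed programs whose consistency vector
satisfies `C` is exactly the sum over boolean vectors `b` of
`#{p₁ : bval p₁ = b} · #{p₂ consistent on Γ_then(C,b)} · #{p₃ consistent on
Γ_else(C,b)}`. -/
theorem ite_unification_count
    {A B₂ B₃ : Type*} [DecidableEq A] [DecidableEq B₂] [DecidableEq B₃]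
    (m : ℕ)
    (P₁ : Finset A) (P₂ : Finset B₂) (P₃ : Finset B₃)
    (bval : A → Fin m → Bool)
    (cons₂ : B₂ → Fin m → Bool) (cons₃ : B₃ → Fin m → Bool)
    (C : Fin m → Bool) :
    ((P₁ ×ˢ P₂ ×ˢ P₃).filter
        (fun q : A × B₂ × B₃ => ∀ i : Fin m, C i = true →
          (if bval q.1 i then cons₂ q.2.1 i else cons₃ q.2.2 i) = true)).card =
      ∑ b : Fin m → Bool,
        (P₁.filter (fun p₁ => bval p₁ = b)).card *
        (P₂.filter (fun p₂ => ∀ i, C i = true → b i = true → cons₂ p₂ i = true)).card *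
        (P₃.filter (fun p₃ => ∀ i, C i = true → b i = false → cons₃ p₃ i = true)).card := by
  classical
  set s := (P₁ ×ˢ P₂ ×ˢ P₃).filter
        (fun q : A × B₂ × B₃ => ∀ i : Fin m, C i = true →
          (if bval q.1 i then cons₂ q.2.1 i else cons₃ q.2.2 i) = true) with hs
  rw [Finset.card_eq_sum_card_fiberwise
    (f := fun q : A × B₂ × B₃ => bval q.1) (t := Finset.univ)
    (fun x _ => Finset.mem_univ _)]
  refine Finset.sum_congr rfl fun b _ => ?_
  have heq : s.filter (fun q => bval q.1 = b) =
      (P₁.filter (fun p₁ => bval p₁ = b)) ×ˢ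
      (P₂.filter (fun p₂ => ∀ i, C i = true → b i = true → cons₂ p₂ i = true)) ×ˢ
      (P₃.filter (fun p₃ => ∀ i, C i = true → b i = false → cons₃ p₃ i = true)) := by
    ext ⟨p₁, p₂, p₃⟩
    simp only [hs, Finset.mem_filter, Finset.mem_product]
    constructor
    · rintro ⟨⟨⟨h1, h2, h3⟩, hc⟩, hb⟩
      subst hb
      refine ⟨⟨h1, rfl⟩, ⟨h2, fun i hC hbi => ?_⟩, ⟨h3, fun i hC hbi => ?_⟩⟩
      · have := hc i hC; rwa [hbi, if_pos rfl] at this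
      · have := hc i hC; rwa [hbi, if_neg (by simp)] at this
    · rintro ⟨⟨h1, hb⟩, ⟨h2, hc2⟩, ⟨h3, hc3⟩⟩
      subst hb
      refine ⟨⟨⟨h1, h2, h3⟩, fun i hC => ?_⟩, rfl⟩
      cases hbi : bval p₁ i with
      | true => rw [if_pos rfl]; exact hc2 i hC hbi
      | false => rw [if_neg (by simp)]; exact hc3 i hC hbi
  rw [heq, Finset.card_product, Finset.card_product, mul_assoc]
end

section
/- Let a₀ ≥ a₁ ≥ … be the non-increasing sequence of consistent hypothesis-space sizes (positive integers) observed after each batch of k examples. For the default g⋆(x) = max(0, (1/ε)(ln x − ln(1/δ))) and batch size k ≤ (1/(2ε)) ln(1/δ), the total number of examples consumed by SynGuar (sampling phase samples plus validation samples (1/ε)(ln a_p + ln(1/δ)) where p is the stopping index) is at most 2·ω, where ω is the infimum over all monotone non-decreasing g : ℕ → ℤ of the total examples consumed using g on the same sequence. -/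
/-- Running threshold of the SynGuar sampling phase after iteration `i`:
`n i = min_{j ≤ i} (k·j + g (a j))`, where `a j` is the consistent
hypothesis-space size after `k·j` examples. -/
def synguarThreshold (k : ℕ) (g : ℕ → ℤ) (a : ℕ → ℕ) (i : ℕ) : ℤ :=
  (Finset.range (i + 1)).inf' (by simp) fun j => (k * j : ℤ) + g (a j)

/-- `p` is the stopping index of the sampling phase with stopping function
`g`: the least iteration whose seen sample count `k·p` exceeds the running
threshold. -/
def synguarStopsAt (k : ℕ) (g : ℕ → ℤ) (a : ℕ → ℕ) (p : ℕ) : Prop :=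
  (k * p : ℤ) > synguarThreshold k g a p ∧
    ∀ q < p, ¬ ((k * q : ℤ) > synguarThreshold k g a q)

/-- Total number of examples consumed by SynGuar when stopping at index `p`:
the `k·p` sampling-phase examples plus the
`⌈(1/ε)(ln a_p + ln(1/δ))⌉` validation examples. -/
noncomputable def synguarTotal (ε δ : ℝ) (k : ℕ) (a : ℕ → ℕ) (p : ℕ) : ℝ :=
  (k * p : ℕ) + ⌈(1 / ε) * (Real.log (a p) + Real.log (1 / δ))⌉

/-- SynGuar's default stopping function
`g⋆(x) = max(0, (1/ε)(ln x − ln(1/δ)))` (rounded up to an integer). -/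
noncomputable def synguarGstar (ε δ : ℝ) (x : ℕ) : ℤ :=
  ⌈max 0 ((1 / ε) * (Real.log x - Real.log (1 / δ)))⌉

/-! ### Auxiliary definitions and lemmas -/

/-- The real-valued validation sample count at index `p`. -/
noncomputable def synguarV (ε δ : ℝ) (a : ℕ → ℕ) (p : ℕ) : ℝ :=
  (1 / ε) * (Real.log (a p) + Real.log (1 / δ))

lemma synguarTotal_eq (ε δ : ℝ) (k : ℕ) (a : ℕ → ℕ) (p : ℕ) :
    synguarTotal ε δ k a p = ((k * p : ℕ) : ℝ) + ((⌈synguarV ε δ a p⌉ : ℤ) : ℝ) := rfl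

private lemma log_natCast_mono {x y : ℕ} (h : x ≤ y) :
    Real.log x ≤ Real.log y := by
  rcases Nat.eq_zero_or_pos x with hx | hx
  · subst hx; simpa using Real.log_natCast_nonneg y
  · exact Real.log_le_log (by exact_mod_cast hx) (by exact_mod_cast h)

private lemma gstar_monotone {ε δ : ℝ} (hε : 0 < ε) :
    Monotone (synguarGstar ε δ) := by
  intro x y h
  apply Int.ceil_le_ceil
  apply max_le_max le_rfl
  have hlog := log_natCast_mono h
  have h1 : 0 ≤ 1 / ε := by positivity
  nlinarith

private lemma threshold_le (k : ℕ) (g : ℕ → ℤ) (a : ℕ → ℕ) {p j : ℕ} (hj : j ≤ p) :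
    synguarThreshold k g a p ≤ (k * j : ℤ) + g (a j) :=
  Finset.inf'_le _ (Finset.mem_range_succ_iff.mpr hj)

private lemma ge_threshold (k : ℕ) (g : ℕ → ℤ) (a : ℕ → ℕ) (p : ℕ)
    (hg : Monotone g) (ha : Antitone a) :
    g (a p) ≤ synguarThreshold k g a p := by
  apply Finset.le_inf'
  intro j hj
  have h1 : g (a p) ≤ g (a j) := hg (ha (Finset.mem_range_succ_iff.mp hj))
  have h2 : (0 : ℤ) ≤ (k * j : ℤ) := by positivity
  linarith

/-- The key integer comparison: SynGuar's total at `g⋆`'s stopping index is at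
most twice the total at the stopping index of any monotone `g`. -/
private lemma main_ineq
    (ε δ : ℝ) (hε0 : 0 < ε) (hδ0 : 0 < δ) (hδ1 : δ < 1)
    (a : ℕ → ℕ) (ha : Antitone a) (ha1 : ∀ i, 1 ≤ a i)
    (k : ℕ) (hk : 1 ≤ k) (hkbound : (k : ℝ) ≤ (1 / (2 * ε)) * Real.log (1 / δ))
    (pstar : ℕ) (hstop : synguarStopsAt k (synguarGstar ε δ) a pstar)
    (g : ℕ → ℤ) (p : ℕ) (hg : Monotone g) (hp : synguarStopsAt k g a p) :
    (k * pstar : ℤ) + ⌈synguarV ε δ a pstar⌉ ≤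
      2 * ((k * p : ℤ) + ⌈synguarV ε δ a p⌉) := by
  set L := Real.log (1 / δ) with hLdef
  have hL : 0 < L := Real.log_pos (by rw [lt_div_iff₀ hδ0]; linarith)
  have hkL : (k : ℝ) ≤ L / (2 * ε) := by
    have heq : (1 / (2 * ε)) * L = L / (2 * ε) := by ring
    rw [hLdef] at hkbound ⊢
    linarith [heq ▸ hkbound]
  have hVL : ∀ q, L / ε ≤ synguarV ε δ a q := by
    intro q
    have hlog : 0 ≤ Real.log (a q) := Real.log_natCast_nonneg _
    have heq : L / ε = (1 / ε) * L := by ring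
    rw [heq, synguarV, ← hLdef]
    have h0 : (0:ℝ) ≤ 1 / ε := by positivity
    nlinarith
  have hkV : ∀ q, (k : ℝ) ≤ synguarV ε δ a q := by
    intro q
    have he2 : L / ε - L / (2 * ε) = (1 / 2) * (L / ε) := by ring
    have hp0 : (0:ℝ) < L / ε := by positivity
    linarith [hVL q]
  have hVmono : ∀ {q r : ℕ}, q ≤ r → synguarV ε δ a r ≤ synguarV ε δ a q := by
    intro q r h
    have hlog := log_natCast_mono (ha h)
    rw [synguarV, synguarV, ← hLdef]
    have : (0:ℝ) ≤ 1 / ε := by positivity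
    nlinarith
  -- Lemma A : g⋆(a q) + k ≤ ⌈V q⌉.
  have lemA : ∀ q, synguarGstar ε δ (a q) + (k : ℤ) ≤ ⌈synguarV ε δ a q⌉ := by
    intro q
    rw [synguarGstar, ← hLdef, ← Int.ceil_add_intCast]
    apply Int.ceil_le_ceil
    push_cast
    have hVq := hVL q
    have hkVq := hkV q
    have h2L : (k : ℝ) ≤ 2 * (L / ε) := by
      have he : 2 * (L / ε) - L / (2 * ε) = (3 / 2) * (L / ε) := by ring
      have hp0 : (0:ℝ) < L / ε := by positivity
      linarith
    have hu : (1 / ε) * (Real.log (a q) - L) = synguarV ε δ a q - 2 * (L / ε) := by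
      rw [synguarV, ← hLdef]; field_simp; ring
    have h1 : (0:ℝ) ≤ synguarV ε δ a q - k := by linarith
    have h2 : (1 / ε) * (Real.log (a q) - L) ≤ synguarV ε δ a q - k := by
      rw [hu]; linarith
    have := max_le h1 h2
    linarith
  rcases le_or_gt pstar p with hple | hplt
  · -- Case 1 : pstar ≤ p
    have h1 : synguarGstar ε δ (a pstar) < (k * pstar : ℤ) :=
      lt_of_le_of_lt (ge_threshold k _ a pstar (gstar_monotone hε0) ha) hstop.1
    have h2 : (1 / ε) * (Real.log (a pstar) - L) < ((k : ℝ) * pstar) := by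
      have hle : (1 / ε) * (Real.log (a pstar) - L) ≤ ((synguarGstar ε δ (a pstar) : ℤ) : ℝ) := by
        rw [synguarGstar, ← hLdef]
        exact le_trans (le_max_right _ _) (Int.le_ceil _)
      have : ((synguarGstar ε δ (a pstar) : ℤ) : ℝ) < ((k * pstar : ℤ) : ℝ) := by
        exact_mod_cast h1
      push_cast at this
      linarith
    have hu : (1 / ε) * (Real.log (a pstar) - L) = synguarV ε δ a pstar - 2 * (L / ε) := by
      rw [synguarV, ← hLdef]; field_simp; ring
    have h3 : synguarV ε δ a pstar < (k : ℝ) * pstar + 2 * (L / ε) := by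
      rw [hu] at h2; linarith
    have h4 : ⌈synguarV ε δ a pstar⌉ ≤ (k * pstar : ℤ) + ⌈2 * (L / ε)⌉ := by
      apply Int.ceil_le.mpr
      push_cast
      have := Int.le_ceil (2 * (L / ε))
      linarith
    have h5 : ⌈2 * (L / ε)⌉ ≤ 2 * ⌈synguarV ε δ a p⌉ := by
      have hr : 2 * (L / ε) ≤ ((2 * ⌈synguarV ε δ a p⌉ : ℤ) : ℝ) := by
        have h6 := Int.le_ceil (synguarV ε δ a p)
        have h7 := hVL p
        push_cast
        linarith
      exact Int.ceil_le.mpr hr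
    have hkk : (k * pstar : ℤ) ≤ (k * p : ℤ) := by
      have : (pstar : ℤ) ≤ (p : ℤ) := by exact_mod_cast hple
      have hk0 : (0:ℤ) ≤ (k : ℤ) := by positivity
      push_cast
      exact mul_le_mul_of_nonneg_left this hk0
    linarith
  · -- Case 2 : p < pstar
    have hq := hp  -- hp : g stops at p
    have hnot := hstop.2 (pstar - 1) (by omega)
    push_neg at hnot
    have h1 : (k * (pstar - 1 : ℕ) : ℤ) ≤ (k * p : ℤ) + synguarGstar ε δ (a p) :=
      le_trans hnot (threshold_le k _ a (show p ≤ pstar - 1 by omega))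
    have h2 : (k * pstar : ℤ) = (k * (pstar - 1 : ℕ) : ℤ) + k := by
      have h1p : 1 ≤ pstar := by omega
      push_cast [Nat.cast_sub h1p]
      ring
    have h3 := lemA p
    have h4 : ⌈synguarV ε δ a pstar⌉ ≤ ⌈synguarV ε δ a p⌉ :=
      Int.ceil_le_ceil (hVmono hplt.le)
    have hkp : (0:ℤ) ≤ (k * p : ℤ) := by positivity
    linarith

/-- 2-optimality of the default stopping function (Theorem P3): for batch
size `k ≤ (1/(2ε)) ln(1/δ)`, the total number of examples consumed by
SynGuar with `g⋆` on any sequence of hypothesis-space sizes `a` is at most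
twice `ω`, the infimum of the total consumed over all monotone
non-decreasing stopping functions `g` on the same sequence. -/
theorem synguar_gstar_two_optimal
    (ε δ : ℝ) (hε : ε ∈ Set.Ioo (0:ℝ) 1) (hδ : δ ∈ Set.Ioo (0:ℝ) 1)
    (a : ℕ → ℕ) (ha : Antitone a) (ha1 : ∀ i, 1 ≤ a i)
    (k : ℕ) (hk : 1 ≤ k) (hkbound : (k : ℝ) ≤ (1 / (2 * ε)) * Real.log (1 / δ))
    (pstar : ℕ) (hstop : synguarStopsAt k (synguarGstar ε δ) a pstar) :
    synguarTotal ε δ k a pstar ≤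
      2 * sInf {r : ℝ | ∃ (g : ℕ → ℤ) (p : ℕ),
        Monotone g ∧ synguarStopsAt k g a p ∧ r = synguarTotal ε δ k a p} := by
  obtain ⟨hε0, hε1⟩ := hε
  obtain ⟨hδ0, hδ1⟩ := hδ
  set S := {r : ℝ | ∃ (g : ℕ → ℤ) (p : ℕ),
      Monotone g ∧ synguarStopsAt k g a p ∧ r = synguarTotal ε δ k a p} with hS
  have hne : S.Nonempty :=
    ⟨synguarTotal ε δ k a pstar, synguarGstar ε δ, pstar, gstar_monotone hε0, hstop, rfl⟩
  have hlb : ∀ r ∈ S, synguarTotal ε δ k a pstar / 2 ≤ r := by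
    rintro r ⟨g, p, hg, hp, rfl⟩
    have hint := main_ineq ε δ hε0 hδ0 hδ1 a ha ha1 k hk hkbound pstar hstop g p hg hp
    have hreal : synguarTotal ε δ k a pstar ≤ 2 * synguarTotal ε δ k a p := by
      rw [synguarTotal_eq, synguarTotal_eq]
      have hR : (((k * pstar : ℤ) + ⌈synguarV ε δ a pstar⌉ : ℤ) : ℝ) ≤
          ((2 * ((k * p : ℤ) + ⌈synguarV ε δ a p⌉) : ℤ) : ℝ) := by exact_mod_cast hint
      push_cast at hR ⊢
      linarith
    linarith
  have := le_csInf hne hlb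
  linarith
end

section
/- For the default stopping function g⋆(x) = max(0, (1/ε)(ln x − ln(1/δ))): at the stopping index p of the sampling phase, the number of validation samples (1/ε)(ln a_p + ln(1/δ)) is at most s_p + (2/ε) ln(1/δ), where s_p is the number of samples seen in the sampling phase; i.e., the validation cost never exceeds the sampling cost by more than (2/ε)·ln(1/δ). -/
/-- For the default stopping function `g⋆(x) = max(0, (1/ε)(ln x − ln(1/δ)))`:
at the stopping index `p` of the sampling phase (the least index whose seen
sample count `s_p = k·p` exceeds the running threshold
`n_i = min_{j ≤ i}(s_j + g⋆(a_j))`), the validation sample count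
`(1/ε)(ln a_p + ln(1/δ))` is at most `s_p + (2/ε) ln(1/δ)`. -/
theorem validation_cost_bounded_by_sampling_cost
    (ε δ : ℝ) (hε : ε ∈ Set.Ioo (0:ℝ) 1) (hδ : δ ∈ Set.Ioo (0:ℝ) 1)
    (a : ℕ → ℕ) (ha : Antitone a) (ha1 : ∀ i, 1 ≤ a i)
    (k : ℕ) (hk : 1 ≤ k)
    (gstar : ℕ → ℝ)
    (hgstar : ∀ x : ℕ,
      gstar x = max 0 ((1 / ε) * (Real.log x - Real.log (1 / δ))))
    (n : ℕ → ℝ)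
    (hn : ∀ i : ℕ, n i =
      (Finset.range (i + 1)).inf' (by simp) fun j => (k * j : ℝ) + gstar (a j))
    (p : ℕ) (hp : (k * p : ℝ) > n p) (hleast : ∀ q < p, ¬ ((k * q : ℝ) > n q)) :
    (1 / ε) * (Real.log (a p) + Real.log (1 / δ)) ≤
      (k * p : ℝ) + (2 / ε) * Real.log (1 / δ) := by
  rw [hn p] at hp
  rw [gt_iff_lt, Finset.inf'_lt_iff] at hp
  obtain ⟨j, hjmem, hj⟩ := hp
  have hjp : j ≤ p := Nat.lt_succ_iff.mp (Finset.mem_range.mp hjmem)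
  have hεpos : (0:ℝ) < ε := hε.1
  have hlogle : Real.log (a p) ≤ Real.log (a j) := by
    apply Real.log_le_log (by exact_mod_cast ha1 p)
    exact_mod_cast ha hjp
  have hg : (1 / ε) * (Real.log (a j) - Real.log (1 / δ)) ≤ gstar (a j) := by
    rw [hgstar]; exact le_max_right _ _
  have hmain : (1 / ε) * (Real.log (a p) - Real.log (1 / δ)) ≤ (k * p : ℝ) := by
    calc (1 / ε) * (Real.log (a p) - Real.log (1 / δ))
        ≤ (1 / ε) * (Real.log (a j) - Real.log (1 / δ)) := by
          apply mul_le_mul_of_nonneg_left (by linarith) (by positivity)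
      _ ≤ gstar (a j) := hg
      _ ≤ (k * j : ℝ) + gstar (a j) := le_add_of_nonneg_left (by positivity)
      _ ≤ (k * p : ℝ) := hj.le
  have : (1 / ε) * (Real.log (a p) + Real.log (1 / δ)) =
      (1 / ε) * (Real.log (a p) - Real.log (1 / δ)) + (2 / ε) * Real.log (1 / δ) := by
    field_simp; ring
  linarith
end
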